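/- arXiv:1404.5064 — 7 statements merged into one kernel-verified Lean document; each statement's English description precedes it below -/
import Mathlib

section
/- For the fully-dropping AIMD matrix A_1 = diag(β) + α(e-β)^T there exists a constant c ∈ (0,1) such that ‖A_1 x‖_1 ≤ c‖x‖_1 for all x in the subspace V = {x ∈ ℝ^n : e^T x = 0}. -/
/-!
If every entry of a column-stochastic matrix `A` is at least `m`, then on the hyperplane
`∑ xᵢ = 0` the matrix acts like `A - m eeᵀ`, whose entries are nonnegative with column sums
`1 - n m`; the triangle inequality then contracts the 1-norm by that factor. The AIMD matrix
`A₁` is column-stochastic with positive entries, so half its smallest entry is such an `m`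
with `0 < n m < 1` (halved because `n · min A₁ = 1` when all entries equal `1/n`).
-/

open Finset Matrix

section ColumnStochastic

variable {ι : Type*} [Fintype ι]

lemma Matrix.mulVec_eq_sum_sub_mul_of_sum_eq_zero (A : Matrix ι ι ℝ) (m : ℝ) {x : ι → ℝ}
    (hx : ∑ i, x i = 0) (i : ι) :
    (A *ᵥ x) i = ∑ j, (A i j - m) * x j := by
  simp only [Matrix.mulVec, dotProduct, sub_mul, sum_sub_distrib, ← mul_sum, hx, mul_zero,
    sub_zero]

variable {A : Matrix ι ι ℝ} {m : ℝ}

lemma Matrix.sum_abs_mulVec_le_of_le_entries (hcol : ∀ j, ∑ i, A i j = 1)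
    (hm : ∀ i j, m ≤ A i j) {x : ι → ℝ} (hx : ∑ i, x i = 0) :
    ∑ i, |(A *ᵥ x) i| ≤ (1 - Fintype.card ι * m) * ∑ i, |x i| :=
  calc ∑ i, |(A *ᵥ x) i| = ∑ i, |∑ j, (A i j - m) * x j| := by
        simp only [mulVec_eq_sum_sub_mul_of_sum_eq_zero A m hx]
    _ ≤ ∑ i, ∑ j, (A i j - m) * |x j| := by
        gcongr with i
        refine (abs_sum_le_sum_abs _ _).trans_eq (sum_congr rfl fun j _ => ?_)
        rw [abs_mul, abs_of_nonneg (sub_nonneg.2 (hm i j))]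
    _ = ∑ j, (∑ i, (A i j - m)) * |x j| := by
        rw [sum_comm]
        simp only [sum_mul]
    _ = (1 - Fintype.card ι * m) * ∑ i, |x i| := by
        simp only [sum_sub_distrib, hcol, sum_const, card_univ, nsmul_eq_mul, mul_sum]

lemma Matrix.card_mul_le_one_of_le_entries [Nonempty ι] (hcol : ∀ j, ∑ i, A i j = 1)
    (hm : ∀ i j, m ≤ A i j) : Fintype.card ι * m ≤ 1 := by
  obtain ⟨j⟩ := ‹Nonempty ι›
  simpa [hcol j] using sum_le_sum fun i (_ : i ∈ univ) => hm i j

end ColumnStochastic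

section AIMD

variable {ι : Type*} [DecidableEq ι] {α β : ι → ℝ} {A : Matrix ι ι ℝ}

lemma aimd_col_sum_eq_one [Fintype ι] (hαs : ∑ i, α i = 1)
    (hA : ∀ i j, A i j = (if i = j then β i else 0) + α i * (1 - β j)) (j : ι) :
    ∑ i, A i j = 1 := by
  simp only [hA, sum_add_distrib, ← sum_mul, hαs, sum_ite_eq']
  simp

lemma aimd_entry_pos (hα : ∀ i, 0 < α i) (hβ : ∀ i, β i ∈ Set.Ioo (0 : ℝ) 1)
    (hA : ∀ i j, A i j = (if i = j then β i else 0) + α i * (1 - β j)) (i j : ι) :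
    0 < A i j := by
  have hdiag : 0 ≤ if i = j then β i else 0 := by split_ifs <;> linarith [(hβ i).1]
  rw [hA]
  exact add_pos_of_nonneg_of_pos hdiag (mul_pos (hα i) (sub_pos.2 (hβ j).2))

end AIMD

/-- For the fully-dropping AIMD matrix `A₁ = diag(β) + α (e-β)ᵀ` there exists
`c ∈ (0,1)` such that `‖A₁ x‖₁ ≤ c ‖x‖₁` for all `x` with `eᵀ x = 0`. -/
theorem stmt2 (n : ℕ) (hn : 2 ≤ n) (α β : Fin n → ℝ)
    (hα : ∀ i, 0 < α i) (hαs : ∑ i, α i = 1)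
    (hβ : ∀ i, β i ∈ Set.Ioo (0 : ℝ) 1)
    (A : Matrix (Fin n) (Fin n) ℝ)
    (hA : ∀ i j, A i j = (if i = j then β i else 0) + α i * (1 - β j)) :
    ∃ c ∈ Set.Ioo (0 : ℝ) 1,
      ∀ x : Fin n → ℝ, ∑ i, x i = 0 → ∑ i, |A.mulVec x i| ≤ c * ∑ i, |x i| := by
  have : Nonempty (Fin n) := ⟨⟨0, by omega⟩⟩
  have hcol := aimd_col_sum_eq_one hαs hA
  obtain ⟨⟨i₀, j₀⟩, hmin⟩ := Finite.exists_min fun p : Fin n × Fin n => A p.1 p.2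
  have hm_pos : 0 < A i₀ j₀ / 2 := half_pos (aimd_entry_pos hα hβ hA i₀ j₀)
  have hm_le : ∀ i j, A i₀ j₀ / 2 ≤ A i j := fun i j => by
    linarith [hmin (i, j), aimd_entry_pos hα hβ hA i j]
  have hnm := Matrix.card_mul_le_one_of_le_entries hcol fun i j => hmin (i, j)
  have hn_pos : (0 : ℝ) < n := by exact_mod_cast (by omega : 0 < n)
  rw [Fintype.card_fin] at hnm
  refine ⟨1 - n * (A i₀ j₀ / 2), ⟨by linarith, by nlinarith⟩, fun x hx => ?_⟩
  simpa using Matrix.sum_abs_mulVec_le_of_le_entries hcol hm_le hx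
end

section
/- For each block matrix A_T built from a column-stochastic matrix A whose induced 1-norm does not exceed 1 (with block structure: first block row A, and i-th block row (1/i)A in the first column and ((i-1)/i)I in column i-1, for i = 2,...,T), the operator norm of A_T induced by the norm ‖z‖_T = max_{i=1,...,T} ‖z_i‖_1 on ℝ^{Tn} is at most 1. -/
/-! The `k`-th block of `A_T z` is the convex combination `(1/k) A z₁ + ((k-1)/k) z_{k-1}`;
both `A z₁` and `z_{k-1}` have `ℓ¹`-norm at most `‖z‖_T` because `A` does not increase the
`ℓ¹`-norm, and the `ℓ¹`-ball is convex. -/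

open Finset

theorem sum_abs_convex_combination_le {ι : Type*} [Fintype ι] {a b M : ℝ} (ha : 0 ≤ a)
    (hb : 0 ≤ b) (hab : a + b = 1) {x y : ι → ℝ} (hx : ∑ j, |x j| ≤ M)
    (hy : ∑ j, |y j| ≤ M) :
    ∑ j, |a * x j + b * y j| ≤ M :=
  calc ∑ j, |a * x j + b * y j|
      ≤ ∑ j, (a * |x j| + b * |y j|) := sum_le_sum fun j _ => by
        simpa only [abs_mul, abs_of_nonneg ha, abs_of_nonneg hb] using
          abs_add_le (a * x j) (b * y j)
    _ = a * ∑ j, |x j| + b * ∑ j, |y j| := by rw [sum_add_distrib, mul_sum, mul_sum]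
    _ ≤ a * M + b * M := by gcongr
    _ = M := by rw [← add_mul, hab, one_mul]

theorem one_div_succ_add_div_succ (k : ℕ) : 1 / ((k : ℝ) + 1) + k / (k + 1) = 1 := by
  field_simp
  ring

theorem stmt4_general (n T : ℕ) (hT : 0 < T)
    (A : Matrix (Fin n) (Fin n) ℝ)
    (hnorm : ∀ x : Fin n → ℝ, ∑ i, |A.mulVec x i| ≤ ∑ i, |x i|) :
    ∀ z : Fin T → Fin n → ℝ,
      (⨆ k : Fin T, ∑ j, |(1 / ((k : ℕ) + 1) : ℝ) * A.mulVec (z ⟨0, hT⟩) j +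
          (((k : ℕ) : ℝ) / ((k : ℕ) + 1)) *
            z ⟨(k : ℕ) - 1, lt_of_le_of_lt (Nat.sub_le _ _) k.isLt⟩ j|) ≤
        ⨆ k : Fin T, ∑ j, |z k j| := by
  intro z
  have : Nonempty (Fin T) := ⟨⟨0, hT⟩⟩
  have hle : ∀ i, ∑ j, |z i j| ≤ ⨆ k : Fin T, ∑ j, |z k j| :=
    le_ciSup (Finite.bddAbove_range _)
  exact ciSup_le fun k => sum_abs_convex_combination_le (by positivity) (by positivity)
    (one_div_succ_add_div_succ k) ((hnorm _).trans (hle _)) (hle _)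

/-- The block matrix `A_T` built from a column-stochastic matrix `A` with induced
1-norm at most 1 (first block row `A`; `i`-th block row `(1/i)A` in the first
block column and `((i-1)/i)I` in block column `i-1`) has operator norm at most 1
with respect to the norm `‖z‖_T = max_i ‖z_i‖₁` on `ℝ^{Tn}`. -/
theorem stmt4 (n T : ℕ) (hn : 1 ≤ n) (hT : 0 < T)
    (A : Matrix (Fin n) (Fin n) ℝ)
    (hpos : ∀ i j, 0 ≤ A i j) (hcol : ∀ j, ∑ i, A i j = 1)
    (hnorm : ∀ x : Fin n → ℝ, ∑ i, |A.mulVec x i| ≤ ∑ i, |x i|) :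
    ∀ z : Fin T → Fin n → ℝ,
      (⨆ k : Fin T, ∑ j, |(1 / ((k : ℕ) + 1) : ℝ) * A.mulVec (z ⟨0, hT⟩) j +
          (((k : ℕ) : ℝ) / ((k : ℕ) + 1)) *
            z ⟨(k : ℕ) - 1, lt_of_le_of_lt (Nat.sub_le _ _) k.isLt⟩ j|) ≤
        ⨆ k : Fin T, ∑ j, |z k j| :=
  stmt4_general n T hT A hnorm
end

section
/- Let A ∈ ℝ^{n×n} be column stochastic with ‖A‖_1 ≤ 1 and with the property that for x with e^T x = 0, ‖Ax‖_1 = ‖x‖_1 implies Ax = x. Let A_T be the associated block matrix. Then for all z in W = {z = (z_1,...,z_T) : e^T z_i = 0 for all i}, if ‖A_T z‖_T = ‖z‖_T then A z_1 = z_1. -/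
open Finset

/-! The maximum of the block norms `‖(A_T z)_k‖₁` is attained at some row `k`. That row is the
average `(1/(k+1)) A z₁ + (k/(k+1)) z_{k-1}`, so if it reaches `max_i ‖z_i‖₁` then
`‖A z₁‖₁ ≥ max_i ‖z_i‖₁ ≥ ‖z₁‖₁`. Together with `‖A z₁‖₁ ≤ ‖z₁‖₁` this is the equality case
that forces `A z₁ = z₁`. -/

theorem sum_abs_mul_add_mul_le {ι : Type*} (s : Finset ι) {a b : ℝ} (ha : 0 ≤ a) (hb : 0 ≤ b)
    (u v : ι → ℝ) :
    ∑ j ∈ s, |a * u j + b * v j| ≤ a * ∑ j ∈ s, |u j| + b * ∑ j ∈ s, |v j| := by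
  rw [mul_sum, mul_sum, ← sum_add_distrib]
  refine sum_le_sum fun j _ => (abs_add_le _ _).trans_eq ?_
  rw [abs_mul, abs_mul, abs_of_nonneg ha, abs_of_nonneg hb]

theorem le_of_le_one_div_add_div_mul {M S V t : ℝ} (ht : 0 ≤ t) (hV : V ≤ M)
    (h : M ≤ 1 / (t + 1) * S + t / (t + 1) * V) : M ≤ S := by
  have hmean : 1 / (t + 1) * S + t / (t + 1) * V = (S + t * V) / (t + 1) := by ring
  rw [hmean, le_div_iff₀ (by positivity)] at h
  nlinarith [mul_le_mul_of_nonneg_left hV ht]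

theorem stmt5_general (n T : ℕ) (hT : 0 < T)
    (A : Matrix (Fin n) (Fin n) ℝ)
    (hnorm : ∀ x : Fin n → ℝ, ∑ i, |A.mulVec x i| ≤ ∑ i, |x i|)
    (hfix : ∀ x : Fin n → ℝ, ∑ i, x i = 0 →
      ∑ i, |A.mulVec x i| = ∑ i, |x i| → A.mulVec x = x) :
    ∀ z : Fin T → Fin n → ℝ, (∀ i, ∑ j, z i j = 0) →
      (⨆ k : Fin T, ∑ j, |(1 / ((k : ℕ) + 1) : ℝ) * A.mulVec (z ⟨0, hT⟩) j +
          (((k : ℕ) : ℝ) / ((k : ℕ) + 1)) *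
            z ⟨(k : ℕ) - 1, lt_of_le_of_lt (Nat.sub_le _ _) k.isLt⟩ j|) =
        (⨆ k : Fin T, ∑ j, |z k j|) →
      A.mulVec (z ⟨0, hT⟩) = z ⟨0, hT⟩ := by
  intro z hz hsup
  have : Nonempty (Fin T) := ⟨⟨0, hT⟩⟩
  have hzM : ∀ i, ∑ j, |z i j| ≤ ⨆ k : Fin T, ∑ j, |z k j| :=
    le_ciSup (Set.finite_range _).bddAbove
  obtain ⟨k, hk⟩ := exists_eq_ciSup_of_finite (f := fun k : Fin T =>
    ∑ j, |(1 / ((k : ℕ) + 1) : ℝ) * A.mulVec (z ⟨0, hT⟩) j +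
      (((k : ℕ) : ℝ) / ((k : ℕ) + 1)) *
        z ⟨(k : ℕ) - 1, lt_of_le_of_lt (Nat.sub_le _ _) k.isLt⟩ j|)
  have hrow := sum_abs_mul_add_mul_le univ
    (a := 1 / ((k : ℕ) + 1)) (b := ((k : ℕ) : ℝ) / ((k : ℕ) + 1)) (by positivity) (by positivity)
    (A.mulVec (z ⟨0, hT⟩)) (z ⟨(k : ℕ) - 1, lt_of_le_of_lt (Nat.sub_le _ _) k.isLt⟩)
  have hMS := le_of_le_one_div_add_div_mul (Nat.cast_nonneg (k : ℕ)) (hzM _)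
    ((hsup ▸ hk).symm.le.trans hrow)
  exact hfix _ (hz _) ((hnorm _).antisymm ((hzM _).trans hMS))

/-- Let `A` be column stochastic with `‖A‖₁ ≤ 1` and such that, for `x` with
`eᵀx = 0`, `‖Ax‖₁ = ‖x‖₁` implies `Ax = x`. If `z ∈ W` (all block components sum
to zero) satisfies `‖A_T z‖_T = ‖z‖_T` for the associated block matrix `A_T`,
then `A z₁ = z₁`. -/
theorem stmt5 (n T : ℕ) (hn : 1 ≤ n) (hT : 0 < T)
    (A : Matrix (Fin n) (Fin n) ℝ)
    (hpos : ∀ i j, 0 ≤ A i j) (hcol : ∀ j, ∑ i, A i j = 1)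
    (hnorm : ∀ x : Fin n → ℝ, ∑ i, |A.mulVec x i| ≤ ∑ i, |x i|)
    (hfix : ∀ x : Fin n → ℝ, ∑ i, x i = 0 →
      ∑ i, |A.mulVec x i| = ∑ i, |x i| → A.mulVec x = x) :
    ∀ z : Fin T → Fin n → ℝ, (∀ i, ∑ j, z i j = 0) →
      (⨆ k : Fin T, ∑ j, |(1 / ((k : ℕ) + 1) : ℝ) * A.mulVec (z ⟨0, hT⟩) j +
          (((k : ℕ) : ℝ) / ((k : ℕ) + 1)) *
            z ⟨(k : ℕ) - 1, lt_of_le_of_lt (Nat.sub_le _ _) k.isLt⟩ j|) =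
        (⨆ k : Fin T, ∑ j, |z k j|) →
      A.mulVec (z ⟨0, hT⟩) = z ⟨0, hT⟩ :=
  stmt5_general n T hT A hnorm hfix
end

section
/- If the matrix A_1 satisfies ‖A_1 x‖_1 ≤ c ‖x‖_1 for all x with e^T x = 0, where c ∈ (0,1), then the associated block matrix A_{T,1} restricted to W = {z : e^T z_i = 0 for all i} satisfies ‖A_{T,1} z‖_T ≤ ((c + T - 1)/T) ‖z‖_T for all z ∈ W, and (c+T-1)/T < 1. -/
open Finset

/-!
Row `k` of `A_{T,1} z` is the convex combination `(1/(k+1)) A z₀ + (k/(k+1)) z_{k-1}`; since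
`z₀` has zero sum, `A` contracts it by `c`, so the row has `ℓ¹`-norm at most
`(c + k)/(k+1) · ‖z‖_T = (1 - (1 - c)/(k+1)) ‖z‖_T`, which increases with `k` and is largest
at `k = T - 1`.
-/

lemma sum_abs_add_mul_le {ι : Type*} [Fintype ι] {a b : ℝ} (ha : 0 ≤ a) (hb : 0 ≤ b)
    (u v : ι → ℝ) :
    ∑ j, |a * u j + b * v j| ≤ a * ∑ j, |u j| + b * ∑ j, |v j| := by
  rw [mul_sum, mul_sum, ← sum_add_distrib]
  gcongr with j
  calc |a * u j + b * v j| ≤ |a * u j| + |b * v j| := abs_add_le _ _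
    _ = a * |u j| + b * |v j| := by rw [abs_mul, abs_mul, abs_of_nonneg ha, abs_of_nonneg hb]

lemma add_sub_one_div_self_eq {c s : ℝ} (hs : s ≠ 0) : (c + s - 1) / s = 1 - (1 - c) / s := by
  field_simp
  ring

lemma add_sub_one_div_le_add_sub_one_div {c s t : ℝ} (hc : c ≤ 1) (hs : 0 < s) (hst : s ≤ t) :
    (c + s - 1) / s ≤ (c + t - 1) / t := by
  rw [add_sub_one_div_self_eq hs.ne', add_sub_one_div_self_eq (hs.trans_le hst).ne']
  have : 0 ≤ 1 - c := by linarith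
  gcongr

lemma add_sub_one_div_lt_one {c t : ℝ} (hc : c < 1) (ht : 0 < t) : (c + t - 1) / t < 1 := by
  rw [div_lt_one ht]
  linarith

theorem stmt6_general (n T : ℕ) (hT : 0 < T) (c : ℝ) (hc : c ∈ Set.Ioo (0 : ℝ) 1)
    (A : Matrix (Fin n) (Fin n) ℝ)
    (hcontr : ∀ x : Fin n → ℝ, ∑ i, x i = 0 →
      ∑ i, |A.mulVec x i| ≤ c * ∑ i, |x i|) :
    (c + (T : ℝ) - 1) / (T : ℝ) < 1 ∧
    ∀ z : Fin T → Fin n → ℝ, (∀ i, ∑ j, z i j = 0) →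
      (⨆ k : Fin T, ∑ j, |(1 / ((k : ℕ) + 1) : ℝ) * A.mulVec (z ⟨0, hT⟩) j +
          (((k : ℕ) : ℝ) / ((k : ℕ) + 1)) *
            z ⟨(k : ℕ) - 1, lt_of_le_of_lt (Nat.sub_le _ _) k.isLt⟩ j|) ≤
        ((c + (T : ℝ) - 1) / (T : ℝ)) * ⨆ k : Fin T, ∑ j, |z k j| := by
  obtain ⟨hc0, hc1⟩ := hc
  have hT1 : (1 : ℝ) ≤ T := by exact_mod_cast hT
  have hT' : (0 : ℝ) < T := by linarith
  refine ⟨add_sub_one_div_lt_one hc1 hT', fun z hz => ?_⟩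
  set M := ⨆ k : Fin T, ∑ j, |z k j|
  have hM : ∀ k, ∑ j, |z k j| ≤ M := le_ciSup (Finite.bddAbove_range _)
  have hM0 : 0 ≤ M := Real.iSup_nonneg fun k => sum_nonneg fun j _ => abs_nonneg _
  have hAz : ∑ j, |A.mulVec (z ⟨0, hT⟩) j| ≤ c * M :=
    (hcontr _ (hz _)).trans (mul_le_mul_of_nonneg_left (hM _) hc0.le)
  refine Real.iSup_le (fun k => ?_) (mul_nonneg (div_nonneg (by linarith) hT'.le) hM0)
  have hkT : ((k : ℕ) : ℝ) + 1 ≤ T := by exact_mod_cast k.isLt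
  calc _ ≤ 1 / ((k : ℕ) + 1 : ℝ) * ∑ j, |A.mulVec (z ⟨0, hT⟩) j| +
          ((k : ℕ) : ℝ) / ((k : ℕ) + 1) * ∑ j, |z ⟨(k : ℕ) - 1, _⟩ j| :=
        sum_abs_add_mul_le (by positivity) (by positivity) _ _
    _ ≤ 1 / ((k : ℕ) + 1 : ℝ) * (c * M) + ((k : ℕ) : ℝ) / ((k : ℕ) + 1) * M := by
        gcongr
        exact hM _
    _ = (c + ((k : ℕ) + 1 : ℝ) - 1) / ((k : ℕ) + 1) * M := by
        field_simp
        ring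
    _ ≤ (c + T - 1) / T * M := by
        gcongr ?_ * M
        exact add_sub_one_div_le_add_sub_one_div hc1.le (by positivity) hkT

/-- If the column-stochastic matrix `A₁` satisfies `‖A₁x‖₁ ≤ c‖x‖₁` for all `x`
with `eᵀx = 0`, where `c ∈ (0,1)`, then the associated block matrix `A_{T,1}`
restricted to `W = {z : eᵀzᵢ = 0 ∀ i}` satisfies
`‖A_{T,1} z‖_T ≤ ((c+T-1)/T) ‖z‖_T`, and `(c+T-1)/T < 1`. -/
theorem stmt6 (n T : ℕ) (hn : 1 ≤ n) (hT : 0 < T) (c : ℝ) (hc : c ∈ Set.Ioo (0 : ℝ) 1)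
    (A : Matrix (Fin n) (Fin n) ℝ)
    (hpos : ∀ i j, 0 ≤ A i j) (hcol : ∀ j, ∑ i, A i j = 1)
    (hcontr : ∀ x : Fin n → ℝ, ∑ i, x i = 0 →
      ∑ i, |A.mulVec x i| ≤ c * ∑ i, |x i|) :
    (c + (T : ℝ) - 1) / (T : ℝ) < 1 ∧
    ∀ z : Fin T → Fin n → ℝ, (∀ i, ∑ j, z i j = 0) →
      (⨆ k : Fin T, ∑ j, |(1 / ((k : ℕ) + 1) : ℝ) * A.mulVec (z ⟨0, hT⟩) j +
          (((k : ℕ) : ℝ) / ((k : ℕ) + 1)) *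
            z ⟨(k : ℕ) - 1, lt_of_le_of_lt (Nat.sub_le _ _) k.isLt⟩ j|) ≤
        ((c + (T : ℝ) - 1) / (T : ℝ)) * ⨆ k : Fin T, ∑ j, |z k j| :=
  stmt6_general n T hT c hc A hcontr
end

section
/- Under assumptions (A1)-(A3), the fixed point of P is unique, and a point x* ∈ Σ is a fixed point of P if and only if x*_i λ_i(x*_i) = x*_j λ_j(x*_j) for all i, j. -/
/-!
Writing `wᵢ = λᵢ(xᵢ) > 0` and `S = ∑ₗ wₗ⁻¹`, the fixed-point equation `xᵢ = wᵢ⁻¹ / S` says exactly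
that every product `xᵢ wᵢ` equals `1 / S`; conversely, if all `xᵢ wᵢ` equal a common `c`, then
`1 = ∑ xᵢ = c S` recovers the fixed-point equation. For uniqueness, two distinct points of the
simplex have coordinates `xᵢ < yᵢ` and `yⱼ < xⱼ`, and strict monotonicity of `r ↦ r λ(r)` turns
these into `c_x < c_y < c_x` for the common values of the products.
-/

open Finset Set

variable {ι : Type*} [Fintype ι]

theorem inv_div_sum_inv_eq_iff_mul_eq_mul {K : Type*} [Field K] {w x : ι → K}
    (hw : ∀ i, w i ≠ 0) (hx : ∑ i, x i = 1) :
    (∀ i, (w i)⁻¹ / ∑ l, (w l)⁻¹ = x i) ↔ ∀ i j, x i * w i = x j * w j := by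
  set S := ∑ l, (w l)⁻¹ with hS_def
  constructor
  · intro h
    have hS : S ≠ 0 := by
      rintro hS0
      simp only [← h, hS0, div_zero, sum_const_zero, zero_ne_one] at hx
    have hxw : ∀ i, x i * w i = S⁻¹ := fun i => by
      rw [← h i]
      field_simp [hw i]
    intro i j
    rw [hxw, hxw]
  · intro h i
    have hcS : x i * w i * S = 1 := by
      rw [← hx, hS_def, mul_sum]
      refine sum_congr rfl fun j _ => ?_
      rw [h i j]
      field_simp [hw j]
    have hS : S ≠ 0 := right_ne_zero_of_mul_eq_one hcS
    field_simp [hw i]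
    linear_combination -hcS

theorem exists_lt_of_sum_eq_of_ne {M : Type*} [AddCommMonoid M] [LinearOrder M]
    [IsOrderedCancelAddMonoid M] {x y : ι → M} (hsum : ∑ i, x i = ∑ i, y i) (hne : x ≠ y) :
    ∃ i, x i < y i := by
  by_contra! hle
  exact hne (funext fun i =>
    ((sum_eq_sum_iff_of_le fun i _ => hle i).1 hsum.symm i (mem_univ i)).symm)

theorem eq_of_mem_stdSimplex_of_forall_apply_eq {𝕜 β : Type*} [Semiring 𝕜] [LinearOrder 𝕜]
    [IsOrderedCancelAddMonoid 𝕜] [Preorder β] {f : ι → 𝕜 → β}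
    (hf : ∀ i, StrictMonoOn (f i) (Icc 0 1)) {x y : ι → 𝕜}
    (hx : x ∈ stdSimplex 𝕜 ι) (hy : y ∈ stdSimplex 𝕜 ι)
    (hfx : ∀ i j, f i (x i) = f j (x j)) (hfy : ∀ i j, f i (y i) = f j (y j)) : x = y := by
  by_contra hne
  obtain ⟨i, hi⟩ := exists_lt_of_sum_eq_of_ne (hx.2.trans hy.2.symm) hne
  obtain ⟨j, hj⟩ := exists_lt_of_sum_eq_of_ne (hy.2.trans hx.2.symm) (Ne.symm hne)
  have := calc f i (x i)
      _ < f i (y i) := hf i (mem_Icc_of_mem_stdSimplex hx i) (mem_Icc_of_mem_stdSimplex hy i) hi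
      _ = f j (y j) := hfy i j
      _ < f j (x j) := hf j (mem_Icc_of_mem_stdSimplex hy j) (mem_Icc_of_mem_stdSimplex hx j) hj
      _ = f i (x i) := hfx j i
  exact lt_irrefl _ this

theorem stmt8_general (n : ℕ) (lam : Fin n → ℝ → ℝ)
    (hmono : ∀ i, StrictMonoOn (fun r => r * lam i r) (Set.Icc 0 1))
    (lmin : ℝ) (hlmin : 0 < lmin)
    (hge : ∀ i, ∀ r ∈ Set.Icc (0 : ℝ) 1, lmin ≤ lam i r) :
    (∀ x : Fin n → ℝ, (∀ i, 0 ≤ x i) → ∑ i, x i = 1 →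
      ((∀ i, (lam i (x i))⁻¹ / (∑ ℓ, (lam ℓ (x ℓ))⁻¹) = x i) ↔
        ∀ i j, x i * lam i (x i) = x j * lam j (x j))) ∧
    (∀ x y : Fin n → ℝ, (∀ i, 0 ≤ x i) → ∑ i, x i = 1 →
      (∀ i, 0 ≤ y i) → ∑ i, y i = 1 →
      (∀ i, (lam i (x i))⁻¹ / (∑ ℓ, (lam ℓ (x ℓ))⁻¹) = x i) →
      (∀ i, (lam i (y i))⁻¹ / (∑ ℓ, (lam ℓ (y ℓ))⁻¹) = y i) →
      x = y) := by
  have fixed_iff : ∀ x : Fin n → ℝ, (∀ i, 0 ≤ x i) → ∑ i, x i = 1 →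
      ((∀ i, (lam i (x i))⁻¹ / (∑ ℓ, (lam ℓ (x ℓ))⁻¹) = x i) ↔
        ∀ i j, x i * lam i (x i) = x j * lam j (x j)) := fun x hx hsum =>
    inv_div_sum_inv_eq_iff_mul_eq_mul
      (fun i => (hlmin.trans_le (hge i _ (mem_Icc_of_mem_stdSimplex ⟨hx, hsum⟩ i))).ne') hsum
  refine ⟨fixed_iff, fun x y hx hsx hy hsy hfx hfy => ?_⟩
  exact eq_of_mem_stdSimplex_of_forall_apply_eq hmono ⟨hx, hsx⟩ ⟨hy, hsy⟩
    ((fixed_iff x hx hsx).1 hfx) ((fixed_iff y hy hsy).1 hfy)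

/-- Under (A1)–(A3), a point `x ∈ Σ` is a fixed point of
`P(x)ᵢ = λᵢ(xᵢ)⁻¹ / ∑_ℓ λ_ℓ(x_ℓ)⁻¹` if and only if
`xᵢ λᵢ(xᵢ) = x_j λ_j(x_j)` for all `i, j`; moreover the fixed point is unique. -/
theorem stmt8 (n : ℕ) (hn : 2 ≤ n) (lam : Fin n → ℝ → ℝ)
    (hmap : ∀ i, ∀ r ∈ Set.Icc (0 : ℝ) 1, lam i r ∈ Set.Icc (0 : ℝ) 1)
    (hcont : ∀ i, ContinuousOn (lam i) (Set.Icc 0 1))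
    (hmono : ∀ i, StrictMonoOn (fun r => r * lam i r) (Set.Icc 0 1))
    (lmin : ℝ) (hlmin : 0 < lmin)
    (hge : ∀ i, ∀ r ∈ Set.Icc (0 : ℝ) 1, lmin ≤ lam i r) :
    (∀ x : Fin n → ℝ, (∀ i, 0 ≤ x i) → ∑ i, x i = 1 →
      ((∀ i, (lam i (x i))⁻¹ / (∑ ℓ, (lam ℓ (x ℓ))⁻¹) = x i) ↔
        ∀ i j, x i * lam i (x i) = x j * lam j (x j))) ∧
    (∀ x y : Fin n → ℝ, (∀ i, 0 ≤ x i) → ∑ i, x i = 1 →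
      (∀ i, 0 ≤ y i) → ∑ i, y i = 1 →
      (∀ i, (lam i (x i))⁻¹ / (∑ ℓ, (lam ℓ (x ℓ))⁻¹) = x i) →
      (∀ i, (lam i (y i))⁻¹ / (∑ ℓ, (lam ℓ (y ℓ))⁻¹) = y i) →
      x = y) :=
  stmt8_general n lam hmono lmin hlmin hge
end

section
/- Under (A1)-(A3), for every η > 0 there exists ε_0 ∈ (0,1) such that for all 0 < ε < ε_0 and all x ∈ Σ with d_H(x, x*) > η (the Hilbert distance, possibly infinite if some x_i = 0), the map R_ε(x) = (1-ε)x + εP(x) satisfies d_H(R_ε(x), x*) < d_H(x, x*). -/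
/-!
Write `ρ k = x k / x* k` and `σ k = λ k (x* k) / λ k (x k)`. Then
`R_ε(x) k / x* k = (1 - ε) ρ k + ε s σ k` with `s > 0` independent of `k`, and
`d_H(x, x*) = log (M / m)` for `M`, `m` the maximum and minimum of `ρ`. So it suffices that
`m · R_ε(x) i / x* i < M · R_ε(x) j / x* j` for all `i`, `j`; as `m ρ i ≤ M ρ j` always, it
is enough to have `m σ i < M σ j` or a positive margin in `m ρ i ≤ M ρ j`.

Strict monotonicity of `r λ(r)` gives `σ k ≤ ρ k` if `ρ k ≥ 1` and `σ k ≥ ρ k` if `ρ k ≤ 1`,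
by a fixed factor `c > 1` once `ρ k` is `θ` away from `1`; continuity of `λ k` at `x* k` gives
`σ k ≈ 1` when `ρ k ≈ 1`. If `m < λ_min²`, the bounds `λ_min ≤ σ ≤ λ_min⁻¹` already give
`m σ i < M σ j`. Otherwise, since `M / m > e^η` forces `M ≥ 1 + 2θ` or `m ≤ 1 - 2θ`, pairs
with `ρ i` near `M` and `ρ j` near `m` satisfy `m σ i < M σ j`, and every other pair has
margin `λ_min² τ` in `m ρ i ≤ M ρ j`, which absorbs the `P`-part once `ε` is small. If some
`x k = 0` the distance is infinite while `R_ε(x)` is positive.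
-/

open Finset

/-- Extended Hilbert distance on the simplex: finite (the Hilbert projective
metric) when all entries of `x` are positive, and `⊤` otherwise. -/
noncomputable def dHE {n : ℕ} (x y : Fin n → ℝ) : EReal :=
  if ∀ i, 0 < x i then
    (((⨆ i, Real.log (x i / y i)) - ⨅ j, Real.log (x j / y j) : ℝ) : EReal)
  else ⊤

open Filter Topology

/-- Applied with `ρ = x k / x* k` and `σ = λ k (x* k) / λ k (x k)`. -/
structure ResponseBounds (b θ c τ ρ σ : ℝ) : Prop where
  mem_Icc : σ ∈ Set.Icc b b⁻¹
  le_of_one_le : 1 ≤ ρ → σ ≤ ρ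
  ge_of_le_one : ρ ≤ 1 → ρ ≤ σ
  gap_above : 1 + θ ≤ ρ → c * σ ≤ ρ
  gap_below : ρ ≤ 1 - θ → c * ρ ≤ σ
  near : |ρ - 1| < τ → σ ∈ Set.Ioo c⁻¹ c

section PairInequalities

variable {m M θ τ c ρi σi ρj σj : ℝ}

lemma mul_lt_mul_of_max_large (hc : 1 < c) (hm : 0 < m) (hm1 : m ≤ 1)
    (hM : 1 + 2 * θ ≤ M) (hτθ : τ ≤ θ) (hρi : M - τ < ρi) (hρiM : ρi ≤ M)
    (hρj : ρj < m + τ) (hmρj : m ≤ ρj)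
    (hgap : 1 + θ ≤ ρi → c * σi ≤ ρi) (hge : ρj ≤ 1 → ρj ≤ σj)
    (hnear : |ρj - 1| < τ → σj ∈ Set.Ioo c⁻¹ c) : m * σi < M * σj := by
  have hcσi : c * σi ≤ M := (hgap (by linarith)).trans hρiM
  have hcσj : m < c * σj := by
    by_cases h : ρj ≤ 1
    · nlinarith [hge h]
    · have h1 : c⁻¹ < σj := (hnear (by rw [abs_of_pos (by linarith)]; linarith)).1
      have h2 : 1 < c * σj := by rwa [inv_lt_iff_one_lt_mul₀ (by linarith), mul_comm] at h1
      linarith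
  have : c * (m * σi) < c * (M * σj) := by nlinarith
  exact lt_of_mul_lt_mul_left this (by linarith)

lemma mul_lt_mul_of_min_small (hc : 1 < c) (hm : 0 < m) (hM1 : 1 ≤ M)
    (hm' : m ≤ 1 - 2 * θ) (hτθ : τ ≤ θ) (hρi : M - τ < ρi) (hρiM : ρi ≤ M)
    (hρj : ρj < m + τ) (hmρj : m ≤ ρj)
    (hgap : ρj ≤ 1 - θ → c * ρj ≤ σj) (hle : 1 ≤ ρi → σi ≤ ρi)
    (hnear : |ρi - 1| < τ → σi ∈ Set.Ioo c⁻¹ c) : m * σi < M * σj := by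
  have hcσj : c * m ≤ σj := by nlinarith [hgap (by linarith)]
  have hσi : σi < c * M := by
    by_cases h : 1 ≤ ρi
    · nlinarith [hle h]
    · have := (hnear (by rw [abs_of_neg (by linarith)]; linarith)).2
      nlinarith
  nlinarith

lemma mul_lt_mul_of_lt_sq {b : ℝ} (hb : 0 < b) (hm0 : 0 ≤ m) (hm : m < b ^ 2) (hM1 : 1 ≤ M)
    (hσi : σi ≤ b⁻¹) (hσj : b ≤ σj) : m * σi < M * σj :=
  calc m * σi ≤ m * b⁻¹ := mul_le_mul_of_nonneg_left hσi hm0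
    _ < b ^ 2 * b⁻¹ := mul_lt_mul_of_pos_right hm (inv_pos.2 hb)
    _ = b := by field_simp
    _ ≤ σj := hσj
    _ ≤ M * σj := le_mul_of_one_le_left (hb.le.trans hσj) hM1

lemma mul_le_sub_of_separated (hρiM : ρi ≤ M) (hmρj : m ≤ ρj) (hm : 0 ≤ m) (hmM : m ≤ M)
    (hsep : ρi ≤ M - τ ∨ m + τ ≤ ρj) : m * τ ≤ M * ρj - m * ρi := by
  rcases hsep with h | h <;> nlinarith

variable {ε qi qj : ℝ}

lemma step_mul_lt_of_mul_lt (hρ : m * ρi ≤ M * ρj) (hq : m * qi < M * qj)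
    (hε0 : 0 < ε) (hε1 : ε ≤ 1) :
    m * ((1 - ε) * ρi + ε * qi) < M * ((1 - ε) * ρj + ε * qj) := by
  nlinarith [mul_le_mul_of_nonneg_left hρ (by linarith : (0:ℝ) ≤ 1 - ε),
    mul_lt_mul_of_pos_left hq hε0]

lemma step_mul_lt_of_margin {d Q : ℝ} (hd : d ≤ M * ρj - m * ρi) (hqi : qi ≤ Q)
    (hqi0 : 0 ≤ qi) (hqj0 : 0 ≤ qj) (hM : 0 ≤ M) (hm1 : m ≤ 1)
    (hε0 : 0 ≤ ε) (hε : ε ≤ 2⁻¹) (hεQ : 2 * ε * Q < d) (hd0 : 0 ≤ d) :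
    m * ((1 - ε) * ρi + ε * qi) < M * ((1 - ε) * ρj + ε * qj) := by
  nlinarith [mul_le_mul_of_nonneg_left hd (by linarith : (0:ℝ) ≤ 1 - ε),
    mul_nonneg hε0 (mul_nonneg hM hqj0), mul_le_mul_of_nonneg_left hm1 (mul_nonneg hε0 hqi0)]

end PairInequalities

lemma mul_step_lt_mul_step {ι : Type*} {ρ σ : ι → ℝ} {m M b θ c τ s ε Q : ℝ}
    (hρm : ∀ k, m ≤ ρ k) (hρM : ∀ k, ρ k ≤ M) (hm0 : 0 < m) (hm1 : m ≤ 1)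
    (hM1 : 1 ≤ M) (hwide : 1 + 2 * θ ≤ M ∨ m ≤ 1 - 2 * θ) (hb : 0 < b)
    (hresp : ∀ k, ResponseBounds b θ c τ (ρ k) (σ k))
    (hc : 1 < c) (hτ : 0 < τ) (hτθ : τ ≤ θ) (hs : 0 < s) (hQ : ∀ k, s * σ k ≤ Q)
    (hε0 : 0 < ε) (hε : ε ≤ 2⁻¹) (hεQ : 2 * ε * Q < b ^ 2 * τ) (i j : ι) :
    m * ((1 - ε) * ρ i + ε * (s * σ i)) < M * ((1 - ε) * ρ j + ε * (s * σ j)) := by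
  have hσ0 : ∀ k, 0 < σ k := fun k => hb.trans_le (hresp k).mem_Icc.1
  have hρ : m * ρ i ≤ M * ρ j := by nlinarith [hρM i, hρm j]
  have of_sigma (h : m * σ i < M * σ j) :
      m * ((1 - ε) * ρ i + ε * (s * σ i)) < M * ((1 - ε) * ρ j + ε * (s * σ j)) := by
    refine step_mul_lt_of_mul_lt hρ ?_ hε0 (by linarith)
    nlinarith [mul_lt_mul_of_pos_left h hs]
  by_cases hsmall : m < b ^ 2
  · exact of_sigma (mul_lt_mul_of_lt_sq hb hm0.le hsmall hM1 (hresp i).mem_Icc.2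
      (hresp j).mem_Icc.1)
  by_cases hnear : M - τ < ρ i ∧ ρ j < m + τ
  · apply of_sigma
    rcases hwide with hM | hm
    · exact mul_lt_mul_of_max_large hc hm0 hm1 hM hτθ hnear.1 (hρM i) hnear.2 (hρm j)
        (hresp i).gap_above (hresp j).ge_of_le_one (hresp j).near
    · exact mul_lt_mul_of_min_small hc hm0 hM1 hm hτθ hnear.1 (hρM i) hnear.2 (hρm j)
        (hresp j).gap_below (hresp i).le_of_one_le (hresp i).near
  · have hsep : b ^ 2 * τ ≤ M * ρ j - m * ρ i := by
      have := mul_le_sub_of_separated (hρM i) (hρm j) hm0.le (by linarith)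
        ((not_and_or.1 hnear).imp le_of_not_gt le_of_not_gt)
      nlinarith
    exact step_mul_lt_of_margin hsep (hQ i) (mul_pos hs (hσ0 i)).le (mul_pos hs (hσ0 j)).le
      (by linarith) hm1 hε0.le hε hεQ (by positivity)

lemma div_mem_Icc_inv {b p q : ℝ} (hb : 0 < b) (hp : p ∈ Set.Icc b 1)
    (hq : q ∈ Set.Icc b 1) : p / q ∈ Set.Icc b b⁻¹ := by
  have hq0 : 0 < q := hb.trans_le hq.1
  constructor
  · rw [le_div_iff₀ hq0]; nlinarith [hp.1, hq.2]
  · rw [div_le_iff₀ hq0, ← div_eq_inv_mul, le_div_iff₀ hb]; nlinarith [hp.2, hq.1]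

section Coordinate

variable {f : ℝ → ℝ} {a θ : ℝ}

lemma div_le_div_of_one_le_div (hpos : ∀ r ∈ Set.Icc (0:ℝ) 1, 0 < f r)
    (hmono : MonotoneOn (fun r => r * f r) (Set.Icc 0 1)) (ha : a ∈ Set.Ioc 0 1) {u : ℝ}
    (hu : u ∈ Set.Icc 0 1) (h : 1 ≤ u / a) : f a / f u ≤ u / a := by
  rw [one_le_div ha.1] at h
  have := hmono (Set.Ioc_subset_Icc_self ha) hu h
  rw [div_le_div_iff₀ (hpos u hu) ha.1]
  simp only at this
  linarith

lemma div_le_div_of_div_le_one (hpos : ∀ r ∈ Set.Icc (0:ℝ) 1, 0 < f r)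
    (hmono : MonotoneOn (fun r => r * f r) (Set.Icc 0 1)) (ha : a ∈ Set.Ioc 0 1) {u : ℝ}
    (hu : u ∈ Set.Icc 0 1) (h : u / a ≤ 1) : u / a ≤ f a / f u := by
  rw [div_le_one ha.1] at h
  have := hmono hu (Set.Ioc_subset_Icc_self ha) h
  rw [div_le_div_iff₀ ha.1 (hpos u hu)]
  simp only at this
  linarith

lemma eventually_gap_above (hpos : ∀ r ∈ Set.Icc (0:ℝ) 1, 0 < f r)
    (hmono : StrictMonoOn (fun r => r * f r) (Set.Icc 0 1)) (ha : a ∈ Set.Ioc 0 1)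
    (hθ : 0 < θ) :
    ∀ᶠ c in 𝓝[>] (1:ℝ), ∀ u ∈ Set.Icc (0:ℝ) 1, 1 + θ ≤ u / a →
      c * (f a / f u) ≤ u / a := by
  by_cases hb1 : (1 + θ) * a ≤ 1
  · set b := (1 + θ) * a
    have hbI : b ∈ Set.Icc (0:ℝ) 1 := ⟨by nlinarith [ha.1], hb1⟩
    have hfa := hpos a (Set.Ioc_subset_Icc_self ha)
    have hab : a * f a < b * f b :=
      hmono (Set.Ioc_subset_Icc_self ha) hbI (by nlinarith [ha.1])
    have hafa : 0 < a * f a := mul_pos ha.1 hfa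
    filter_upwards [Ioc_mem_nhdsGT ((one_lt_div hafa).2 hab)] with c hc u hu hθu
    rw [le_div_iff₀ ha.1] at hθu
    have hcab := (le_div_iff₀ hafa).1 hc.2
    have hbu : b * f b ≤ u * f u := hmono.monotoneOn hbI hu hθu
    rw [mul_div_assoc', div_le_div_iff₀ (hpos u hu) ha.1]
    linarith
  · filter_upwards with c u hu hθu
    rw [le_div_iff₀ ha.1] at hθu
    linarith [hu.2]

lemma eventually_gap_below (hpos : ∀ r ∈ Set.Icc (0:ℝ) 1, 0 < f r)
    (hmono : StrictMonoOn (fun r => r * f r) (Set.Icc 0 1)) (ha : a ∈ Set.Ioc 0 1)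
    (hθ : 0 < θ) (hθ1 : θ < 1) :
    ∀ᶠ c in 𝓝[>] (1:ℝ), ∀ u ∈ Set.Icc (0:ℝ) 1, u / a ≤ 1 - θ →
      c * (u / a) ≤ f a / f u := by
  set b := (1 - θ) * a
  have hb0 : 0 < b := mul_pos (by linarith) ha.1
  have hbI : b ∈ Set.Icc (0:ℝ) 1 := ⟨hb0.le, by nlinarith [ha.2]⟩
  have hfb := hpos b hbI
  have hba : b * f b < a * f a := hmono hbI (Set.Ioc_subset_Icc_self ha) (by nlinarith [ha.1])
  have hbfb : 0 < b * f b := mul_pos hb0 hfb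
  filter_upwards [Ioc_mem_nhdsGT ((one_lt_div hbfb).2 hba)] with c hc u hu hθu
  rw [div_le_iff₀ ha.1] at hθu
  have hcba := (le_div_iff₀ hbfb).1 hc.2
  have hub : u * f u ≤ b * f b := hmono.monotoneOn hu hbI hθu
  rw [mul_div_assoc', div_le_div_iff₀ ha.1 (hpos u hu)]
  nlinarith [hc.1]

lemma eventually_near (hcont : ContinuousWithinAt f (Set.Icc 0 1) a) (hfa : f a ≠ 0)
    (ha : a ∈ Set.Ioc 0 1) {c : ℝ} (hc : 1 < c) :
    ∀ᶠ τ in 𝓝[>] (0:ℝ), ∀ u ∈ Set.Icc (0:ℝ) 1, |u / a - 1| < τ →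
      f a / f u ∈ Set.Ioo c⁻¹ c := by
  have hmem : Set.Ioo c⁻¹ c ∈ 𝓝 (f a / f a) := by
    rw [div_self hfa]; exact Ioo_mem_nhds (inv_lt_one_of_one_lt₀ hc) hc
  obtain ⟨δ, hδ, hball⟩ :=
    Metric.mem_nhdsWithin_iff.1 ((continuousWithinAt_const.div hcont hfa) hmem)
  filter_upwards [Ioo_mem_nhdsGT hδ] with τ hτ u hu hua
  refine hball ⟨?_, hu⟩
  rw [Metric.mem_ball, Real.dist_eq]
  calc |u - a| = a * |u / a - 1| := by
        rw [← abs_of_pos ha.1, ← abs_mul, abs_of_pos ha.1, mul_sub,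
          mul_div_cancel₀ _ ha.1.ne', mul_one]
    _ ≤ |u / a - 1| := mul_le_of_le_one_left (abs_nonneg _) ha.2
    _ < δ := hua.trans hτ.2

end Coordinate

lemma exists_responseBounds {ι : Type*} [Finite ι] {lam : ι → ℝ → ℝ} {xs : ι → ℝ}
    {b θ : ℝ} (hb : 0 < b) (hlam : ∀ i, ∀ r ∈ Set.Icc (0:ℝ) 1, lam i r ∈ Set.Icc b 1)
    (hcont : ∀ i, ContinuousOn (lam i) (Set.Icc 0 1))
    (hmono : ∀ i, StrictMonoOn (fun r => r * lam i r) (Set.Icc 0 1))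
    (hxs : ∀ i, xs i ∈ Set.Ioc 0 1) (hθ : 0 < θ) (hθ1 : θ < 1) :
    ∃ c τ, 1 < c ∧ 0 < τ ∧ τ ≤ θ ∧ ∀ k, ∀ u ∈ Set.Icc (0:ℝ) 1,
      ResponseBounds b θ c τ (u / xs k) (lam k (xs k) / lam k u) := by
  have hpos i : ∀ r ∈ Set.Icc (0:ℝ) 1, 0 < lam i r := fun r hr => hb.trans_le (hlam i r hr).1
  have hxsI i : xs i ∈ Set.Icc (0:ℝ) 1 := Set.Ioc_subset_Icc_self (hxs i)
  obtain ⟨c, hgap, hc⟩ := ((eventually_all.2 fun k =>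
    (eventually_gap_above (hpos k) (hmono k) (hxs k) hθ).and
      (eventually_gap_below (hpos k) (hmono k) (hxs k) hθ hθ1)).and self_mem_nhdsWithin).exists
  obtain ⟨τ, hnear, hτ, hτθ⟩ := ((eventually_all.2 fun k =>
    eventually_near (hcont k _ (hxsI k)) (hpos k _ (hxsI k)).ne' (hxs k) hc).and
      (Ioc_mem_nhdsGT hθ)).exists
  refine ⟨c, τ, hc, hτ, hτθ, fun k u hu =>
    ⟨div_mem_Icc_inv hb (hlam k _ (hxsI k)) (hlam k u hu),
    div_le_div_of_one_le_div (hpos k) (hmono k).monotoneOn (hxs k) hu,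
    div_le_div_of_div_le_one (hpos k) (hmono k).monotoneOn (hxs k) hu,
    (hgap k).1 u hu, (hgap k).2 u hu, hnear k u hu⟩⟩

lemma exists_margin {η : ℝ} (hη : 0 < η) :
    ∃ θ > 0, 2 * θ < 1 ∧ 1 + 2 * θ < Real.exp η * (1 - 2 * θ) := by
  have h : ∀ᶠ θ in 𝓝 (0:ℝ), 2 * θ < 1 ∧ 1 + 2 * θ < Real.exp η * (1 - 2 * θ) :=
    (ContinuousAt.eventually_lt (by fun_prop) (by fun_prop) (by norm_num)).and
      (ContinuousAt.eventually_lt (by fun_prop) (by fun_prop)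
        (by simpa using Real.one_lt_exp_iff.2 hη))
  obtain ⟨θ, ⟨hθ1, hθη⟩, hθ⟩ :=
    ((h.filter_mono (nhdsWithin_le_nhds (s := Set.Ioi 0))).and self_mem_nhdsWithin).exists
  exact ⟨θ, hθ, hθ1, hθη⟩

lemma ciSup_log {ι : Type*} [Finite ι] [Nonempty ι] {v : ι → ℝ} (hv : ∀ i, 0 < v i) :
    ⨆ i, Real.log (v i) = Real.log (⨆ i, v i) := by
  obtain ⟨i₀, h⟩ := exists_eq_ciSup_of_finite (f := v)
  rw [← h]
  exact le_antisymm (ciSup_le fun i => Real.log_le_log (hv i) (h ▸ Finite.le_ciSup v i))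
    (Finite.le_ciSup (fun i => Real.log (v i)) i₀)

lemma ciInf_log {ι : Type*} [Finite ι] [Nonempty ι] {v : ι → ℝ} (hv : ∀ i, 0 < v i) :
    ⨅ i, Real.log (v i) = Real.log (⨅ i, v i) := by
  obtain ⟨i₀, h⟩ := exists_eq_ciInf_of_finite (f := v)
  rw [← h]
  exact le_antisymm (Finite.ciInf_le _ i₀)
    (le_ciInf fun i => Real.log_le_log (hv i₀) (h ▸ Finite.ciInf_le v i))

lemma ciInf_div_le_one {ι : Type*} [Fintype ι] [Nonempty ι] {x y : ι → ℝ}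
    (hy : ∀ i, 0 < y i) (h : ∑ i, x i ≤ ∑ i, y i) : ⨅ i, x i / y i ≤ 1 := by
  obtain ⟨i, -, hi⟩ := exists_le_of_sum_le univ_nonempty h
  exact (Finite.ciInf_le _ i).trans ((div_le_one (hy i)).2 hi)

lemma one_le_ciSup_div {ι : Type*} [Fintype ι] [Nonempty ι] {x y : ι → ℝ}
    (hy : ∀ i, 0 < y i) (h : ∑ i, y i ≤ ∑ i, x i) : 1 ≤ ⨆ i, x i / y i := by
  obtain ⟨i, -, hi⟩ := exists_le_of_sum_le univ_nonempty h
  exact ((one_le_div (hy i)).2 hi).trans (Finite.le_ciSup (fun i => x i / y i) i)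

lemma dHE_of_pos {n : ℕ} [Nonempty (Fin n)] {x y : Fin n → ℝ} (hx : ∀ i, 0 < x i)
    (hy : ∀ i, 0 < y i) :
    dHE x y = (Real.log ((⨆ i, x i / y i) / ⨅ i, x i / y i) : ℝ) := by
  have hv i : 0 < x i / y i := div_pos (hx i) (hy i)
  obtain ⟨j, hj⟩ := exists_eq_ciInf_of_finite (f := fun i => x i / y i)
  rw [dHE, if_pos hx, ciSup_log hv, ciInf_log hv, Real.log_div
    ((hv j).trans_le (Finite.le_ciSup (fun i => x i / y i) j)).ne' (hj ▸ (hv j).ne')]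

lemma dHE_lt_of_forall_mul_lt {n : ℕ} [Nonempty (Fin n)] {x y z : Fin n → ℝ}
    (hx : ∀ i, 0 < x i) (hy : ∀ i, 0 < y i) (hz : ∀ i, 0 < z i)
    (h : ∀ i j, (⨅ k, x k / z k) * (y i / z i) < (⨆ k, x k / z k) * (y j / z j)) :
    dHE y z < dHE x z := by
  obtain ⟨i, hi⟩ := exists_eq_ciSup_of_finite (f := fun k => y k / z k)
  obtain ⟨j, hj⟩ := exists_eq_ciInf_of_finite (f := fun k => y k / z k)
  obtain ⟨j', hj'⟩ := exists_eq_ciInf_of_finite (f := fun k => x k / z k)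
  have hm : 0 < ⨅ k, x k / z k := hj' ▸ div_pos (hx j') (hz j')
  have hyj : 0 < y j / z j := div_pos (hy j) (hz j)
  rw [dHE_of_pos hy hz, dHE_of_pos hx hz, EReal.coe_lt_coe_iff, ← hi, ← hj]
  refine Real.log_lt_log (div_pos (div_pos (hy i) (hz i)) hyj) ?_
  rw [div_lt_div_iff₀ hyj hm, mul_comm]
  exact h i j

lemma dHE_lt_of_not_pos {n : ℕ} {x y z : Fin n → ℝ} (hy : ∀ i, 0 < y i)
    (hx : ¬ ∀ i, 0 < x i) : dHE y z < dHE x z := by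
  rw [dHE, if_pos hy, dHE, if_neg hx]
  exact EReal.coe_lt_top _

lemma inv_div_div_eq_div_mul_div {l l' S S' a : ℝ} (hl : l ≠ 0) (hl' : l' ≠ 0) (hS : S ≠ 0)
    (hS' : S' ≠ 0) (ha : l'⁻¹ / S' = a) : l⁻¹ / S / a = S' / S * (l' / l) := by
  subst ha
  field_simp

lemma dHE_step_lt_of_pos {n : ℕ} [Nonempty (Fin n)] {lam : Fin n → ℝ → ℝ}
    {xs x : Fin n → ℝ} {b θ c τ μ ε η : ℝ} (hlx : ∀ i, 0 < lam i (x i))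
    (hlxs : ∀ i, 0 < lam i (xs i)) (hxs : ∀ i, 0 < xs i)
    (hfix : ∀ i, (lam i (xs i))⁻¹ / (∑ ℓ, (lam ℓ (xs ℓ))⁻¹) = xs i)
    (hx : ∀ i, 0 < x i) (hsum : ∑ i, x i = ∑ i, xs i)
    (hb : 0 < b)
    (hresp : ∀ k, ResponseBounds b θ c τ (x k / xs k) (lam k (xs k) / lam k (x k)))
    (hc : 1 < c) (hτ : 0 < τ) (hτθ : τ ≤ θ)
    (hθη : 1 + 2 * θ < Real.exp η * (1 - 2 * θ))
    (hμ : ∀ k, μ ≤ xs k) (hμ0 : 0 < μ) (hε0 : 0 < ε) (hε : ε ≤ 2⁻¹)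
    (hεμ : 2 * ε < b ^ 2 * τ * μ) (hdist : (η : EReal) < dHE x xs) :
    dHE (fun i => (1 - ε) * x i + ε * ((lam i (x i))⁻¹ / ∑ ℓ, (lam ℓ (x ℓ))⁻¹)) xs
      < dHE x xs := by
  set S := ∑ ℓ, (lam ℓ (x ℓ))⁻¹
  set S' := ∑ ℓ, (lam ℓ (xs ℓ))⁻¹
  have hS : 0 < S := sum_pos (fun i _ => inv_pos.2 (hlx i)) univ_nonempty
  have hS' : 0 < S' := sum_pos (fun i _ => inv_pos.2 (hlxs i)) univ_nonempty
  have hratio k : (lam k (x k))⁻¹ / S / xs k = S' / S * (lam k (xs k) / lam k (x k)) :=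
    inv_div_div_eq_div_mul_div (hlx k).ne' (hlxs k).ne' hS.ne' hS'.ne' (hfix k)
  have hm0 : 0 < ⨅ k, x k / xs k := by
    obtain ⟨j, hj⟩ := exists_eq_ciInf_of_finite (f := fun k => x k / xs k)
    exact hj ▸ div_pos (hx j) (hxs j)
  have hM0 : 0 < ⨆ k, x k / xs k :=
    hm0.trans_le (ciInf_le_ciSup (Finite.bddBelow_range _) (Finite.bddAbove_range _))
  have hwide : 1 + 2 * θ ≤ ⨆ k, x k / xs k ∨ ⨅ k, x k / xs k ≤ 1 - 2 * θ := by
    rw [dHE_of_pos hx hxs, EReal.coe_lt_coe_iff, Real.lt_log_iff_exp_lt (div_pos hM0 hm0),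
      lt_div_iff₀ hm0] at hdist
    by_contra! h
    nlinarith [Real.exp_pos η]
  have hQ k : S' / S * (lam k (xs k) / lam k (x k)) ≤ μ⁻¹ := by
    rw [← hratio, div_le_iff₀ (hxs k)]
    calc (lam k (x k))⁻¹ / S ≤ 1 :=
          (div_le_one hS).2 (single_le_sum (fun j _ => (inv_pos.2 (hlx j)).le) (mem_univ k))
      _ ≤ μ⁻¹ * xs k := by rw [← div_eq_inv_mul, one_le_div hμ0]; exact hμ k
  refine dHE_lt_of_forall_mul_lt hx (fun i => ?_) hxs fun i j => ?_
  · exact add_pos (mul_pos (by linarith) (hx i))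
      (mul_pos hε0 (div_pos (inv_pos.2 (hlx i)) hS))
  · simp only [add_div, mul_div_assoc, hratio]
    exact mul_step_lt_mul_step (fun k => Finite.ciInf_le _ k) (fun k => Finite.le_ciSup _ k) hm0
      (ciInf_div_le_one hxs hsum.le) (one_le_ciSup_div hxs hsum.ge) hwide hb hresp hc hτ hτθ
      (div_pos hS' hS) hQ hε0 hε (by rwa [← div_eq_mul_inv, div_lt_iff₀ hμ0]) i j

theorem stmt16_general (n : ℕ) (lam : Fin n → ℝ → ℝ)
    (hmap : ∀ i, ∀ r ∈ Set.Icc (0 : ℝ) 1, lam i r ∈ Set.Icc (0 : ℝ) 1)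
    (hcont : ∀ i, ContinuousOn (lam i) (Set.Icc 0 1))
    (hmono : ∀ i, StrictMonoOn (fun r => r * lam i r) (Set.Icc 0 1))
    (lmin : ℝ) (hlmin : 0 < lmin)
    (hge : ∀ i, ∀ r ∈ Set.Icc (0 : ℝ) 1, lmin ≤ lam i r)
    (xs : Fin n → ℝ) (hxspos : ∀ i, 0 < xs i) (hxssum : ∑ i, xs i = 1)
    (hfix : ∀ i, (lam i (xs i))⁻¹ / (∑ ℓ, (lam ℓ (xs ℓ))⁻¹) = xs i) :
    ∀ η : ℝ, 0 < η → ∃ ε₀ ∈ Set.Ioo (0 : ℝ) 1, ∀ ε : ℝ, 0 < ε → ε < ε₀ →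
      ∀ x : Fin n → ℝ, (∀ i, 0 ≤ x i) → ∑ i, x i = 1 →
        (η : EReal) < dHE x xs →
        dHE (fun i => (1 - ε) * x i +
            ε * ((lam i (x i))⁻¹ / (∑ ℓ, (lam ℓ (x ℓ))⁻¹))) xs
          < dHE x xs := by
  intro η hη
  have : Nonempty (Fin n) :=
    univ_nonempty_iff.1 (nonempty_of_sum_ne_zero (hxssum ▸ one_ne_zero))
  have hunit {v : Fin n → ℝ} (h0 : ∀ i, 0 ≤ v i) (h1 : ∑ i, v i = 1) i :
      v i ∈ Set.Icc (0:ℝ) 1 :=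
    ⟨h0 i, h1 ▸ single_le_sum (fun j _ => h0 j) (mem_univ i)⟩
  have hxs i : xs i ∈ Set.Ioc (0:ℝ) 1 :=
    ⟨hxspos i, (hunit (fun j => (hxspos j).le) hxssum i).2⟩
  have hlxs i : 0 < lam i (xs i) := hlmin.trans_le (hge i _ (Set.Ioc_subset_Icc_self (hxs i)))
  have hlam i : ∀ r ∈ Set.Icc (0:ℝ) 1, lam i r ∈ Set.Icc lmin 1 :=
    fun r hr => ⟨hge i r hr, (hmap i r hr).2⟩
  obtain ⟨θ, hθ, hθ1, hθη⟩ := exists_margin hη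
  obtain ⟨c, τ, hc, hτ, hτθ, hresp⟩ :=
    exists_responseBounds hlmin hlam hcont hmono hxs hθ (by linarith)
  obtain ⟨k₀, hk₀⟩ := Finite.exists_min xs
  have hε₀ : 0 < lmin ^ 2 * τ * xs k₀ / 2 := by have := hxspos k₀; positivity
  refine ⟨min 2⁻¹ (lmin ^ 2 * τ * xs k₀ / 2), ⟨lt_min (by norm_num) hε₀,
    (min_le_left _ _).trans_lt (by norm_num)⟩, fun ε hε hεε₀ x hx0 hx1 hdist => ?_⟩
  have hε2 : ε ≤ 2⁻¹ := (hεε₀.trans_le (min_le_left _ _)).le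
  have hlx i : 0 < lam i (x i) := hlmin.trans_le (hge i _ (hunit hx0 hx1 i))
  by_cases hxpos : ∀ i, 0 < x i
  · exact dHE_step_lt_of_pos hlx hlxs hxspos hfix hxpos (hx1.trans hxssum.symm) hlmin
      (fun k => hresp k _ (hunit hx0 hx1 k)) hc hτ hτθ hθη hk₀
      (hxspos k₀) hε hε2 (by linarith [hεε₀.trans_le (min_le_right _ _)]) hdist
  · refine dHE_lt_of_not_pos (fun i => add_pos_of_nonneg_of_pos (mul_nonneg (by linarith) (hx0 i))
      (mul_pos hε (div_pos (inv_pos.2 (hlx i)) ?_))) hxpos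
    exact sum_pos (fun j _ => inv_pos.2 (hlx j)) univ_nonempty

/-- Under (A1)–(A3), with `x*` the fixed point of `P`, for every `η > 0` there is
`ε₀ ∈ (0,1)` such that for `0 < ε < ε₀` and `x ∈ Σ` with `d_H(x,x*) > η`
(possibly infinite), the map `R_ε(x) = (1-ε)x + εP(x)` strictly decreases the
Hilbert distance to `x*`. -/
theorem stmt16 (n : ℕ) (hn : 2 ≤ n) (lam : Fin n → ℝ → ℝ)
    (hmap : ∀ i, ∀ r ∈ Set.Icc (0 : ℝ) 1, lam i r ∈ Set.Icc (0 : ℝ) 1)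
    (hcont : ∀ i, ContinuousOn (lam i) (Set.Icc 0 1))
    (hmono : ∀ i, StrictMonoOn (fun r => r * lam i r) (Set.Icc 0 1))
    (lmin : ℝ) (hlmin : 0 < lmin)
    (hge : ∀ i, ∀ r ∈ Set.Icc (0 : ℝ) 1, lmin ≤ lam i r)
    (xs : Fin n → ℝ) (hxspos : ∀ i, 0 < xs i) (hxssum : ∑ i, xs i = 1)
    (hfix : ∀ i, (lam i (xs i))⁻¹ / (∑ ℓ, (lam ℓ (xs ℓ))⁻¹) = xs i) :
    ∀ η : ℝ, 0 < η → ∃ ε₀ ∈ Set.Ioo (0 : ℝ) 1, ∀ ε : ℝ, 0 < ε → ε < ε₀ →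
      ∀ x : Fin n → ℝ, (∀ i, 0 ≤ x i) → ∑ i, x i = 1 →
        (η : EReal) < dHE x xs →
        dHE (fun i => (1 - ε) * x i +
            ε * ((lam i (x i))⁻¹ / (∑ ℓ, (lam ℓ (x ℓ))⁻¹))) xs
          < dHE x xs :=
  stmt16_general n lam hmap hcont hmono lmin hlmin hge xs hxspos hxssum hfix
end

section
/- Under (A1)-(A3), for every η > 0 there exist ε_0 ∈ (0,1) and C_η > 0 such that for all 0 < ε < ε_0 and all x ∈ ri Σ with d_H(x, x*) ≥ η: e^{d_H}(R_ε(x), x*) < (1 - C_η ε) e^{d_H}(x, x*), and hence d_H(R_ε(x), x*) < d_H(x, x*) - C_η ε. -/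
/-!
Write `r = x / x*` and `p = P(x) / x*`, and let `M`, `m` be the largest and smallest entries of
`r`. The ratios of `R_ε(x)` are `(1 - ε) r + ε p`; if their maximum and minimum sit at `i` and `j`,
then `M · min - m · max = (1 - ε) (M r_j - m r_i) + ε (M p_j - m p_i)`. The first term is never
negative, and when it vanishes `(i, j)` is an extremal pair for `r`; then `P(x*) = x*` and the
strict monotonicity of `r ↦ r λ_i(r)` make the second term positive. Hence `pairGap r p`, the
minimum over all pairs of the larger of the two terms, is positive whenever `m < M`, also on the
boundary of the simplex. It is continuous, so it is bounded below by some `c > 0` on the compact set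
`{x ∈ Σ | e^η m ≤ M}`, and for `ε` small compared with `c` the cross difference above is at
least `ε c`, a fixed fraction of `M · min`.
-/

open Finset

/-- Exponentiated Hilbert projective metric on the interior of the simplex. -/
noncomputable def eDH {n : ℕ} (x y : Fin n → ℝ) : ℝ :=
  (⨆ i, x i / y i) / (⨅ j, x j / y j)

section FiniteExtrema

variable {ι X α : Type*} [Fintype ι] [Nonempty ι] [TopologicalSpace X]
  [ConditionallyCompleteLattice α] [TopologicalSpace α]

lemma ContinuousOn.ciSup_of_fintype [ContinuousSup α] {f : ι → X → α} {s : Set X}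
    (hf : ∀ i, ContinuousOn (f i) s) : ContinuousOn (fun x => ⨆ i, f i x) s := by
  simpa only [← Finset.sup'_univ_eq_ciSup] using
    ContinuousOn.finset_sup'_apply univ_nonempty fun i _ => hf i

lemma ContinuousOn.ciInf_of_fintype [ContinuousInf α] {f : ι → X → α} {s : Set X}
    (hf : ∀ i, ContinuousOn (f i) s) : ContinuousOn (fun x => ⨅ i, f i x) s := by
  simpa only [← Finset.inf'_univ_eq_ciInf] using
    ContinuousOn.finset_inf'_apply univ_nonempty fun i _ => hf i

end FiniteExtrema

lemma ciInf_div_nonneg {ι : Type*} [Nonempty ι] {z w : ι → ℝ} (hz : ∀ i, 0 ≤ z i)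
    (hw : ∀ i, 0 < w i) : 0 ≤ ⨅ i, z i / w i :=
  le_ciInf fun i => div_nonneg (hz i) (hw i).le

section Ratios

variable {ι : Type*} [Fintype ι] {z w : ι → ℝ}

lemma div_le_iSup_inv (hz : z ∈ stdSimplex ℝ ι) (hw : ∀ i, 0 < w i) (i : ι) :
    z i / w i ≤ ⨆ j, (w j)⁻¹ :=
  calc z i / w i ≤ 1 / w i :=
        div_le_div_of_nonneg_right (mem_Icc_of_mem_stdSimplex hz i).2 (hw i).le
    _ = (w i)⁻¹ := one_div _
    _ ≤ ⨆ j, (w j)⁻¹ := le_ciSup (f := fun j => (w j)⁻¹) (Finite.bddAbove_range _) i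

variable [Nonempty ι]

lemma ciInf_div_le_one_s17 (hz : z ∈ stdSimplex ℝ ι) (hw : w ∈ stdSimplex ℝ ι)
    (hw0 : ∀ i, 0 < w i) : ⨅ i, z i / w i ≤ 1 := by
  by_contra! h
  have hlt : ∀ i, w i < z i := fun i =>
    (one_lt_div (hw0 i)).1 (h.trans_le (ciInf_le (Finite.bddBelow_range _) i))
  have := Finset.sum_lt_sum_of_nonempty univ_nonempty fun i _ => hlt i
  rw [hw.2, hz.2] at this
  exact this.false

lemma one_le_ciSup_div_s17 (hz : z ∈ stdSimplex ℝ ι) (hw : w ∈ stdSimplex ℝ ι)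
    (hw0 : ∀ i, 0 < w i) : 1 ≤ ⨆ i, z i / w i := by
  by_contra! h
  have hlt : ∀ i, z i < w i := fun i =>
    (div_lt_one (hw0 i)).1 ((le_ciSup (Finite.bddAbove_range _) i).trans_lt h)
  have := Finset.sum_lt_sum_of_nonempty univ_nonempty fun i _ => hlt i
  rw [hw.2, hz.2] at this
  exact this.false

lemma ciInf_div_pos (hz : ∀ i, 0 < z i) (hw : ∀ i, 0 < w i) : 0 < ⨅ i, z i / w i := by
  obtain ⟨i, hi⟩ := exists_eq_ciInf_of_finite (f := fun i => z i / w i)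
  exact hi ▸ div_pos (hz i) (hw i)

end Ratios

lemma div_lt_div_iff_one_lt_of_strictMonoOn {g : ℝ → ℝ}
    (hg : StrictMonoOn (fun r => r * g r) (Set.Icc 0 1)) {s u : ℝ} (hs : s ∈ Set.Icc (0 : ℝ) 1)
    (hu : u ∈ Set.Icc (0 : ℝ) 1) (hs0 : 0 < s) (hgu : 0 < g u) :
    g s / g u < u / s ↔ 1 < u / s := by
  rw [div_lt_div_iff₀ hgu hs0, one_lt_div hs0, mul_comm (g s)]
  exact hg.lt_iff_lt hs hu

lemma div_lt_div_iff_lt_one_of_strictMonoOn {g : ℝ → ℝ}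
    (hg : StrictMonoOn (fun r => r * g r) (Set.Icc 0 1)) {s u : ℝ} (hs : s ∈ Set.Icc (0 : ℝ) 1)
    (hu : u ∈ Set.Icc (0 : ℝ) 1) (hs0 : 0 < s) (hgu : 0 < g u) :
    u / s < g s / g u ↔ u / s < 1 := by
  rw [div_lt_div_iff₀ hs0 hgu, div_lt_one hs0, mul_comm (g s)]
  exact hg.lt_iff_lt hu hs

lemma mul_le_one_sub_mul_add_mul_of_le_max {a b c L ε : ℝ} (ha : 0 ≤ a) (hb : -L ≤ b)
    (hab : c ≤ max a b) (hε : 0 ≤ ε) (hε1 : ε ≤ 1) (hεc : ε * (2 * c + L) ≤ c) :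
    ε * c ≤ (1 - ε) * a + ε * b := by
  rcases le_max_iff.1 hab with hca | hcb
  · nlinarith
  · nlinarith

lemma Real.log_lt_sub_of_lt_one_sub_mul {a b t : ℝ} (ha : 0 < a) (hb : 0 < b)
    (h : b < (1 - t) * a) : Real.log b < Real.log a - t := by
  have ht : 0 < 1 - t := pos_of_mul_pos_left (hb.trans h) ha.le
  calc Real.log b < Real.log ((1 - t) * a) := Real.log_lt_log hb h
    _ = Real.log (1 - t) + Real.log a := Real.log_mul ht.ne' ha.ne'
    _ ≤ -t + Real.log a := by linarith [Real.log_le_sub_one_of_pos ht]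
    _ = Real.log a - t := by ring

section InvNormalize

variable {ι : Type*} [Fintype ι] {lam : ι → ℝ → ℝ}

noncomputable def invNormalize (lam : ι → ℝ → ℝ) (x : ι → ℝ) : ι → ℝ :=
  fun i => (lam i (x i))⁻¹ / ∑ ℓ, (lam ℓ (x ℓ))⁻¹

noncomputable def relax (lam : ι → ℝ → ℝ) (ε : ℝ) (x : ι → ℝ) : ι → ℝ :=
  fun i => (1 - ε) * x i + ε * invNormalize lam x i

variable [Nonempty ι] (hpos : ∀ i, ∀ r ∈ Set.Icc (0 : ℝ) 1, 0 < lam i r)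
include hpos

lemma sum_inv_pos {x : ι → ℝ} (hx : x ∈ stdSimplex ℝ ι) : 0 < ∑ ℓ, (lam ℓ (x ℓ))⁻¹ :=
  Finset.sum_pos (fun ℓ _ => inv_pos.2 (hpos ℓ _ (mem_Icc_of_mem_stdSimplex hx ℓ))) univ_nonempty

lemma invNormalize_pos {x : ι → ℝ} (hx : x ∈ stdSimplex ℝ ι) (i : ι) :
    0 < invNormalize lam x i :=
  div_pos (inv_pos.2 (hpos i _ (mem_Icc_of_mem_stdSimplex hx i))) (sum_inv_pos hpos hx)

lemma invNormalize_mem_stdSimplex {x : ι → ℝ} (hx : x ∈ stdSimplex ℝ ι) :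
    invNormalize lam x ∈ stdSimplex ℝ ι :=
  ⟨fun i => (invNormalize_pos hpos hx i).le, by
    show ∑ i, (lam i (x i))⁻¹ / _ = 1
    rw [← Finset.sum_div, div_self (sum_inv_pos hpos hx).ne']⟩

lemma relax_mem_stdSimplex {x : ι → ℝ} (hx : x ∈ stdSimplex ℝ ι) {ε : ℝ}
    (hε : ε ∈ Set.Icc (0 : ℝ) 1) :
    relax lam ε x ∈ stdSimplex ℝ ι :=
  convex_stdSimplex ℝ ι hx (invNormalize_mem_stdSimplex hpos hx) (sub_nonneg.2 hε.2) hε.1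
    (sub_add_cancel 1 ε)

lemma relax_pos {x : ι → ℝ} (hx : x ∈ stdSimplex ℝ ι) (hx0 : ∀ i, 0 < x i) {ε : ℝ}
    (hε : ε ∈ Set.Icc (0 : ℝ) 1) (i : ι) : 0 < relax lam ε x i := by
  rcases hε.2.lt_or_eq with hε1 | rfl
  · exact add_pos_of_pos_of_nonneg (mul_pos (sub_pos.2 hε1) (hx0 i))
      (mul_nonneg hε.1 (invNormalize_pos hpos hx i).le)
  · simpa [relax] using invNormalize_pos hpos hx i

lemma continuousOn_invNormalize_apply (hcont : ∀ i, ContinuousOn (lam i) (Set.Icc 0 1)) (i : ι) :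
    ContinuousOn (fun x => invNormalize lam x i) (stdSimplex ℝ ι) := by
  have hlam : ∀ k, ContinuousOn (fun x : ι → ℝ => (lam k (x k))⁻¹) (stdSimplex ℝ ι) := fun k =>
    ((hcont k).comp (continuous_apply k).continuousOn
      fun x hx => mem_Icc_of_mem_stdSimplex hx k).inv₀
        fun x hx => (hpos k _ (mem_Icc_of_mem_stdSimplex hx k)).ne'
  exact (hlam i).div (continuousOn_finsetSum _ fun k _ => hlam k)
    fun x hx => (sum_inv_pos hpos hx).ne'

lemma invNormalize_div_of_isFixedPt {xs x : ι → ℝ} (hxs : xs ∈ stdSimplex ℝ ι)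
    (hfix : invNormalize lam xs = xs) (hx : x ∈ stdSimplex ℝ ι) (i : ι) :
    invNormalize lam x i / xs i = lam i (xs i) / lam i (x i) *
      ((∑ ℓ, (lam ℓ (xs ℓ))⁻¹) / ∑ ℓ, (lam ℓ (x ℓ))⁻¹) := by
  have hxsi := hpos i _ (mem_Icc_of_mem_stdSimplex hxs i)
  have hxi := hpos i _ (mem_Icc_of_mem_stdSimplex hx i)
  have hS := sum_inv_pos hpos hxs
  have hT := sum_inv_pos hpos hx
  conv_lhs => rw [← congrFun hfix i]
  simp only [invNormalize]
  field_simp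

end InvNormalize

section PairGap

variable {ι : Type*} [Fintype ι] [Nonempty ι]

noncomputable def pairGap (r p : ι → ℝ) : ℝ :=
  ⨅ ij : ι × ι, max ((⨆ k, r k) * r ij.2 - (⨅ k, r k) * r ij.1)
    ((⨆ k, r k) * p ij.2 - (⨅ k, r k) * p ij.1)

lemma mul_le_iSup_mul_iInf_sub_iInf_mul_iSup_of_le_pairGap {r p : ι → ℝ} {c L ε : ℝ}
    (hm : 0 ≤ ⨅ k, r k) (hm1 : ⨅ k, r k ≤ 1) (hp : ∀ k, 0 ≤ p k) (hpL : ∀ k, p k ≤ L)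
    (hc : c ≤ pairGap r p) (hε : 0 ≤ ε) (hε1 : ε ≤ 1) (hεc : ε * (2 * c + L) ≤ c) :
    ε * c ≤ (⨆ k, r k) * (⨅ k, (1 - ε) * r k + ε * p k)
      - (⨅ k, r k) * (⨆ k, (1 - ε) * r k + ε * p k) := by
  set M := ⨆ k, r k
  set m := ⨅ k, r k
  obtain ⟨i, hi⟩ := exists_eq_ciSup_of_finite (f := fun k => (1 - ε) * r k + ε * p k)
  obtain ⟨j, hj⟩ := exists_eq_ciInf_of_finite (f := fun k => (1 - ε) * r k + ε * p k)
  rw [← hi, ← hj]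
  have hmr : m ≤ r j := ciInf_le (Finite.bddBelow_range _) j
  have hrM : r i ≤ M := le_ciSup (Finite.bddAbove_range _) i
  have hM : 0 ≤ M := hm.trans (hmr.trans (le_ciSup (Finite.bddAbove_range _) j))
  have ha : 0 ≤ M * r j - m * r i := by
    nlinarith [mul_le_mul_of_nonneg_left hmr hM, mul_le_mul_of_nonneg_left hrM hm]
  have hb : -L ≤ M * p j - m * p i := by
    nlinarith [mul_nonneg hM (hp j), mul_le_of_le_one_left (hp i) hm1, hpL i]
  calc ε * c ≤ (1 - ε) * (M * r j - m * r i) + ε * (M * p j - m * p i) :=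
        mul_le_one_sub_mul_add_mul_of_le_max ha hb
          (hc.trans (ciInf_le (Finite.bddBelow_range _) (i, j))) hε hε1 hεc
    _ = _ := by ring

end PairGap

lemma pairGap_pos_of_forall {ι : Type*} [Fintype ι] [Nonempty ι] {r p : ι → ℝ}
    (h : ∀ i j, 0 < max ((⨆ k, r k) * r j - (⨅ k, r k) * r i)
      ((⨆ k, r k) * p j - (⨅ k, r k) * p i)) : 0 < pairGap r p := by
  obtain ⟨⟨i, j⟩, hij⟩ := exists_eq_ciInf_of_finite (f := fun ij : ι × ι =>
    max ((⨆ k, r k) * r ij.2 - (⨅ k, r k) * r ij.1) ((⨆ k, r k) * p ij.2 - (⨅ k, r k) * p ij.1))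
  rw [pairGap, ← hij]
  exact h i j

section Contraction

variable {ι : Type*} [Fintype ι] {lam : ι → ℝ → ℝ} {xs : ι → ℝ}
  (hpos : ∀ i, ∀ r ∈ Set.Icc (0 : ℝ) 1, 0 < lam i r)
  (hxs : xs ∈ stdSimplex ℝ ι) (hxs0 : ∀ i, 0 < xs i)
include hpos hxs hxs0

lemma mul_div_lam_sub_mul_div_lam_pos
    (hmono : ∀ i, StrictMonoOn (fun r => r * lam i r) (Set.Icc 0 1)) {x : ι → ℝ}
    (hx : x ∈ stdSimplex ℝ ι) {i j : ι} (hj0 : 0 < x j / xs j) (hji : x j / xs j < x i / xs i)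
    (hj1 : x j / xs j ≤ 1) (hi1 : 1 ≤ x i / xs i) :
    0 < x i / xs i * (lam j (xs j) / lam j (x j)) - x j / xs j * (lam i (xs i) / lam i (x i)) := by
  have hIcc := mem_Icc_of_mem_stdSimplex hx
  have hsIcc := mem_Icc_of_mem_stdSimplex hxs
  have hqi_lt := div_lt_div_iff_one_lt_of_strictMonoOn (hmono i) (hsIcc i) (hIcc i) (hxs0 i)
    (hpos i _ (hIcc i))
  have hri_lt := div_lt_div_iff_lt_one_of_strictMonoOn (hmono i) (hsIcc i) (hIcc i) (hxs0 i)
    (hpos i _ (hIcc i))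
  have hqj_lt := div_lt_div_iff_one_lt_of_strictMonoOn (hmono j) (hsIcc j) (hIcc j) (hxs0 j)
    (hpos j _ (hIcc j))
  have hrj_lt := div_lt_div_iff_lt_one_of_strictMonoOn (hmono j) (hsIcc j) (hIcc j) (hxs0 j)
    (hpos j _ (hIcc j))
  have hqi := not_lt.1 fun h => (hri_lt.1 h).not_ge hi1
  have hqj := not_lt.1 fun h => (hqj_lt.1 h).not_ge hj1
  rcases hi1.lt_or_eq with hi | hi
  · nlinarith [hqi_lt.2 hi]
  · nlinarith [hrj_lt.2 (hji.trans_eq hi.symm)]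

variable [Nonempty ι]

lemma pairGap_pos (hmono : ∀ i, StrictMonoOn (fun r => r * lam i r) (Set.Icc 0 1))
    (hfix : invNormalize lam xs = xs) {x : ι → ℝ} (hx : x ∈ stdSimplex ℝ ι)
    (hmM : ⨅ k, x k / xs k < ⨆ k, x k / xs k) :
    0 < pairGap (fun k => x k / xs k) (fun k => invNormalize lam x k / xs k) := by
  refine pairGap_pos_of_forall fun i j => ?_
  set M := ⨆ k, x k / xs k
  set m := ⨅ k, x k / xs k
  have hm0 : 0 ≤ m := ciInf_div_nonneg hx.1 hxs0
  have hm1 : m ≤ 1 := ciInf_div_le_one_s17 hx hxs hxs0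
  have hM1 : 1 ≤ M := one_le_ciSup_div_s17 hx hxs hxs0
  have hmr : m ≤ x j / xs j := ciInf_le (f := fun k => x k / xs k) (Finite.bddBelow_range _) j
  have hrM : x i / xs i ≤ M := le_ciSup (f := fun k => x k / xs k) (Finite.bddAbove_range _) i
  rcases (show 0 ≤ M * (x j / xs j) - m * (x i / xs i) by
    nlinarith [mul_le_mul_of_nonneg_left hmr (zero_le_one.trans hM1),
      mul_le_mul_of_nonneg_left hrM hm0]).lt_or_eq with ha | ha
  · exact lt_max_of_lt_left ha
  refine lt_max_of_lt_right ?_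
  have hrj : x j / xs j = m := by nlinarith [mul_le_mul_of_nonneg_left hrM hm0]
  rcases hm0.eq_or_lt with hm | hm
  · rw [← hm, zero_mul, sub_zero]
    exact mul_pos (by linarith) (div_pos (invNormalize_pos hpos hx j) (hxs0 j))
  have hri : x i / xs i = M := by nlinarith [mul_le_mul_of_nonneg_left hrM hm0]
  rw [invNormalize_div_of_isFixedPt hpos hxs hfix hx i,
    invNormalize_div_of_isFixedPt hpos hxs hfix hx j, ← mul_assoc, ← mul_assoc, ← sub_mul]
  refine mul_pos ?_ (div_pos (sum_inv_pos hpos hxs) (sum_inv_pos hpos hx))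
  have := mul_div_lam_sub_mul_div_lam_pos hpos hxs hxs0 hmono hx (hrj ▸ hm)
    (hrj ▸ hri ▸ hmM) (hrj ▸ hm1) (hri ▸ hM1)
  rwa [hri, hrj] at this

lemma exists_pos_le_pairGap (hcont : ∀ i, ContinuousOn (lam i) (Set.Icc 0 1))
    (hmono : ∀ i, StrictMonoOn (fun r => r * lam i r) (Set.Icc 0 1))
    (hfix : invNormalize lam xs = xs) {η : ℝ} (hη : 0 < η) :
    ∃ c > 0, ∀ x ∈ stdSimplex ℝ ι, Real.exp η * (⨅ k, x k / xs k) ≤ ⨆ k, x k / xs k →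
      c ≤ pairGap (fun k => x k / xs k) (fun k => invNormalize lam x k / xs k) := by
  have hr : ∀ k, Continuous fun x : ι → ℝ => x k / xs k := fun k =>
    (continuous_apply k).div_const _
  have hM := continuousOn_univ.1 (ContinuousOn.ciSup_of_fintype fun k => (hr k).continuousOn)
  have hm := continuousOn_univ.1 (ContinuousOn.ciInf_of_fintype fun k => (hr k).continuousOn)
  have hp := fun k => (continuousOn_invNormalize_apply hpos hcont k).div_const (xs k)
  set K := stdSimplex ℝ ι ∩ {x | Real.exp η * (⨅ k, x k / xs k) ≤ ⨆ k, x k / xs k}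
  have hK : IsCompact K :=
    (isCompact_stdSimplex ℝ ι).inter_right (isClosed_le (continuous_const.mul hm) hM)
  have hgap : ContinuousOn
      (fun x => pairGap (fun k => x k / xs k) (fun k => invNormalize lam x k / xs k)) K := by
    refine (ContinuousOn.ciInf_of_fintype fun ij => ?_).mono Set.inter_subset_left
    exact ((hM.mul (hr ij.2)).sub (hm.mul (hr ij.1))).continuousOn.sup
      ((hM.continuousOn.mul (hp ij.2)).sub (hm.continuousOn.mul (hp ij.1)))
  obtain ⟨c, hc, hcK⟩ := hK.exists_forall_le' hgap fun x ⟨hx, hηx⟩ => by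
    refine pairGap_pos hpos hxs hxs0 hmono hfix hx ?_
    have := ciInf_div_nonneg hx.1 hxs0
    have := one_le_ciSup_div_s17 hx hxs hxs0
    nlinarith [Real.one_lt_exp_iff.2 hη, show Real.exp η * _ ≤ _ from hηx]
  exact ⟨c, hc, fun x hx hηx => hcK x ⟨hx, hηx⟩⟩

end Contraction

section HilbertMetric

variable {n : ℕ} [Nonempty (Fin n)]

lemma eDH_pos {x y : Fin n → ℝ} (hx : ∀ i, 0 < x i) (hy : ∀ i, 0 < y i) : 0 < eDH x y :=
  have hm := ciInf_div_pos hx hy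
  div_pos (hm.trans_le (ciInf_le_ciSup (Finite.bddBelow_range _) (Finite.bddAbove_range _))) hm

lemma exp_mul_ciInf_le_ciSup_of_le_log_eDH {x y : Fin n → ℝ} (hx : ∀ i, 0 < x i)
    (hy : ∀ i, 0 < y i) {η : ℝ} (h : η ≤ Real.log (eDH x y)) :
    Real.exp η * (⨅ k, x k / y k) ≤ ⨆ k, x k / y k := by
  rw [← le_div_iff₀ (ciInf_div_pos hx hy)]
  exact (Real.exp_le_exp.2 h).trans_eq (Real.exp_log (eDH_pos hx hy))

lemma eDH_relax_lt {lam : Fin n → ℝ → ℝ} {xs : Fin n → ℝ}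
    (hpos : ∀ i, ∀ r ∈ Set.Icc (0 : ℝ) 1, 0 < lam i r)
    (hxs : xs ∈ stdSimplex ℝ (Fin n)) (hxs0 : ∀ i, 0 < xs i) {x : Fin n → ℝ}
    (hx : x ∈ stdSimplex ℝ (Fin n)) (hx0 : ∀ i, 0 < x i) {c ε : ℝ} (hc : 0 < c)
    (hgap : c ≤ pairGap (fun k => x k / xs k) (fun k => invNormalize lam x k / xs k))
    (hε : 0 < ε) (hε1 : ε ≤ 1) (hεc : ε * (2 * c + ⨆ i, (xs i)⁻¹) ≤ c) :
    eDH (relax lam ε x) xs < (1 - c / (2 * ⨆ i, (xs i)⁻¹) * ε) * eDH x xs := by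
  set L := ⨆ i, (xs i)⁻¹
  set y := relax lam ε x
  have hy := relax_mem_stdSimplex hpos hx ⟨hε.le, hε1⟩
  have hyr : ∀ k, y k / xs k = (1 - ε) * (x k / xs k) + ε * (invNormalize lam x k / xs k) := by
    intro k
    simp only [y, relax]
    ring
  have hcross := mul_le_iSup_mul_iInf_sub_iInf_mul_iSup_of_le_pairGap (ciInf_div_nonneg hx.1 hxs0)
    (ciInf_div_le_one_s17 hx hxs hxs0) (fun k => div_nonneg (invNormalize_pos hpos hx k).le (hxs0 k).le)
    (div_le_iSup_inv (invNormalize_mem_stdSimplex hpos hx) hxs0) hgap hε.le hε1 hεc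
  simp only [← hyr] at hcross
  have hm := ciInf_div_pos hx0 hxs0
  have hν := ciInf_div_pos (relax_pos hpos hx hx0 ⟨hε.le, hε1⟩) hxs0
  have hν1 := ciInf_div_le_one_s17 hy hxs hxs0
  have hM := one_le_ciSup_div_s17 hx hxs hxs0
  have hML : ⨆ k, x k / xs k ≤ L := ciSup_le (div_le_iSup_inv hx hxs0)
  have hL : 0 < L := by linarith
  -- the factor `c / (2 L)` is chosen so that it eats at most half of the gain `ε c`
  have hloss : c / (2 * L) * ε * ((⨆ k, x k / xs k) * ⨅ k, y k / xs k) ≤ ε * c / 2 := by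
    calc c / (2 * L) * ε * ((⨆ k, x k / xs k) * ⨅ k, y k / xs k) ≤ c / (2 * L) * ε * (L * 1) := by
          gcongr
      _ = ε * c / 2 := by field_simp
  unfold eDH
  rw [mul_div_assoc', div_lt_div_iff₀ hν hm]
  nlinarith

end HilbertMetric

theorem stmt17_general (n : ℕ) (lam : Fin n → ℝ → ℝ)
    (hcont : ∀ i, ContinuousOn (lam i) (Set.Icc 0 1))
    (hmono : ∀ i, StrictMonoOn (fun r => r * lam i r) (Set.Icc 0 1))
    (lmin : ℝ) (hlmin : 0 < lmin)
    (hge : ∀ i, ∀ r ∈ Set.Icc (0 : ℝ) 1, lmin ≤ lam i r)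
    (xs : Fin n → ℝ) (hxspos : ∀ i, 0 < xs i) (hxssum : ∑ i, xs i = 1)
    (hfix : ∀ i, (lam i (xs i))⁻¹ / (∑ ℓ, (lam ℓ (xs ℓ))⁻¹) = xs i) :
    ∀ η : ℝ, 0 < η → ∃ ε₀ ∈ Set.Ioo (0 : ℝ) 1, ∃ Cη : ℝ, 0 < Cη ∧
      ∀ ε : ℝ, 0 < ε → ε < ε₀ →
      ∀ x : Fin n → ℝ, (∀ i, 0 < x i) → ∑ i, x i = 1 →
        η ≤ Real.log (eDH x xs) →
        (eDH (fun i => (1 - ε) * x i +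
            ε * ((lam i (x i))⁻¹ / (∑ ℓ, (lam ℓ (x ℓ))⁻¹))) xs
          < (1 - Cη * ε) * eDH x xs) ∧
        (Real.log (eDH (fun i => (1 - ε) * x i +
            ε * ((lam i (x i))⁻¹ / (∑ ℓ, (lam ℓ (x ℓ))⁻¹))) xs)
          < Real.log (eDH x xs) - Cη * ε) := by
  intro η hη
  obtain ⟨i₀, -⟩ := nonempty_of_sum_ne_zero (hxssum ▸ one_ne_zero : ∑ i, xs i ≠ 0)
  have : Nonempty (Fin n) := ⟨i₀⟩
  have hxs : xs ∈ stdSimplex ℝ (Fin n) := ⟨fun i => (hxspos i).le, hxssum⟩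
  have hpos : ∀ i, ∀ r ∈ Set.Icc (0 : ℝ) 1, 0 < lam i r := fun i r hr =>
    hlmin.trans_le (hge i r hr)
  obtain ⟨c, hc, hgap⟩ := exists_pos_le_pairGap hpos hxs hxspos hcont hmono (funext hfix) hη
  set L := ⨆ i, (xs i)⁻¹
  have hL : 0 < L := (inv_pos.2 (hxspos i₀)).trans_le
    (le_ciSup (f := fun i => (xs i)⁻¹) (Finite.bddAbove_range _) i₀)
  refine ⟨c / (2 * c + L), ⟨by positivity, (div_lt_one (by positivity)).2 (by linarith)⟩,
    c / (2 * L), by positivity, fun ε hε hεlt x hx0 hxsum hηx => ?_⟩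
  have hx : x ∈ stdSimplex ℝ (Fin n) := ⟨fun i => (hx0 i).le, hxsum⟩
  have hεc : ε * (2 * c + L) ≤ c := ((lt_div_iff₀ (by positivity)).1 hεlt).le
  have hε1 : ε ≤ 1 := by nlinarith
  have hlt := eDH_relax_lt hpos hxs hxspos hx hx0 hc
    (hgap x hx (exp_mul_ciInf_le_ciSup_of_le_log_eDH hx0 hxspos hηx)) hε hε1 hεc
  exact ⟨hlt, Real.log_lt_sub_of_lt_one_sub_mul (eDH_pos hx0 hxspos)
    (eDH_pos (relax_pos hpos hx hx0 ⟨hε.le, hε1⟩) hxspos) hlt⟩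

/-- Under (A1)–(A3), with `x*` the fixed point of `P`, for every `η > 0` there
exist `ε₀ ∈ (0,1)` and `C_η > 0` such that for `0 < ε < ε₀` and `x ∈ ri Σ` with
`d_H(x,x*) ≥ η`:
`e^{d_H}(R_ε(x), x*) < (1 - C_η ε) e^{d_H}(x, x*)` and hence
`d_H(R_ε(x), x*) < d_H(x, x*) - C_η ε`. -/
theorem stmt17 (n : ℕ) (hn : 2 ≤ n) (lam : Fin n → ℝ → ℝ)
    (hmap : ∀ i, ∀ r ∈ Set.Icc (0 : ℝ) 1, lam i r ∈ Set.Icc (0 : ℝ) 1)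
    (hcont : ∀ i, ContinuousOn (lam i) (Set.Icc 0 1))
    (hmono : ∀ i, StrictMonoOn (fun r => r * lam i r) (Set.Icc 0 1))
    (lmin : ℝ) (hlmin : 0 < lmin)
    (hge : ∀ i, ∀ r ∈ Set.Icc (0 : ℝ) 1, lmin ≤ lam i r)
    (xs : Fin n → ℝ) (hxspos : ∀ i, 0 < xs i) (hxssum : ∑ i, xs i = 1)
    (hfix : ∀ i, (lam i (xs i))⁻¹ / (∑ ℓ, (lam ℓ (xs ℓ))⁻¹) = xs i) :
    ∀ η : ℝ, 0 < η → ∃ ε₀ ∈ Set.Ioo (0 : ℝ) 1, ∃ Cη : ℝ, 0 < Cη ∧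
      ∀ ε : ℝ, 0 < ε → ε < ε₀ →
      ∀ x : Fin n → ℝ, (∀ i, 0 < x i) → ∑ i, x i = 1 →
        η ≤ Real.log (eDH x xs) →
        (eDH (fun i => (1 - ε) * x i +
            ε * ((lam i (x i))⁻¹ / (∑ ℓ, (lam ℓ (x ℓ))⁻¹))) xs
          < (1 - Cη * ε) * eDH x xs) ∧
        (Real.log (eDH (fun i => (1 - ε) * x i +
            ε * ((lam i (x i))⁻¹ / (∑ ℓ, (lam ℓ (x ℓ))⁻¹))) xs)
          < Real.log (eDH x xs) - Cη * ε) :=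
  stmt17_general n lam hcont hmono lmin hlmin hge xs hxspos hxssum hfix
end
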